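/- Let X : Ω → ℝⁿ be a square-integrable random vector with second moment matrix Γ_X = E[X Xᵀ]. Let u₁, …, uₙ be an orthonormal basis of ℝⁿ consisting of eigenvectors of Γ_X with eigenvalues λ₁ ≥ λ₂ ≥ ⋯ ≥ λₙ ≥ 0, and for r ≤ n let P = Σ_{i=1}^{r} uᵢ uᵢᵀ be the orthogonal projection onto the span of the first r eigenvectors. Then rank(P) ≤ r and for every A ∈ ℝ^{n×n} with rank(A) ≤ r, E‖P X − X‖₂² ≤ E‖A X − X‖₂². -/

import Mathlib

/-! Since `Γ_X = ∑ⱼ λⱼ uⱼ uⱼᵀ`, the error of any `B` is `E‖B X - X‖² = ∑ⱼ λⱼ ‖B uⱼ - uⱼ‖²`,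
which for the projection `P` is `∑_{j ≥ r} λⱼ`. If `rank A ≤ r`, let `Q` be the orthogonal
projection onto the range of `A` and `pⱼ = ‖Q uⱼ‖²`. Then `‖A uⱼ - uⱼ‖² ≥ 1 - pⱼ` because `A uⱼ`
lies in that range, while `0 ≤ pⱼ ≤ 1` and, by Bessel's inequality, `∑ⱼ pⱼ ≤ r`. For such
weights, comparing each `λⱼ` with the threshold `λ_r` (or `0` if `r = n`) gives
`∑ⱼ λⱼ pⱼ ≤ ∑_{j < r} λⱼ`, hence `E‖A X - X‖² ≥ ∑ⱼ λⱼ (1 - pⱼ) ≥ ∑_{j ≥ r} λⱼ`. -/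

open Matrix MeasureTheory

/-- Second (cross-)moment matrix `E[X Yᵀ]` of two random vectors. -/
noncomputable def secondMoment {Ω : Type} [MeasurableSpace Ω] (μ : Measure Ω)
    {n m : ℕ} (X : Ω → Fin n → ℝ) (Y : Ω → Fin m → ℝ) : Matrix (Fin n) (Fin m) ℝ :=
  Matrix.of fun i j => ∫ ω, X ω i * Y ω j ∂μ

namespace Matrix

variable {n ι R : Type*} [Fintype n] [CommRing R]

theorem sum_vecMulVec_self_eq_one [DecidableEq n] {u : n → n → R}
    (hu : ∀ i j, u i ⬝ᵥ u j = if i = j then 1 else 0) :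
    ∑ i, vecMulVec (u i) (u i) = 1 := by
  have hrows : of u * (of u)ᵀ = 1 := by
    ext i j
    simpa [mul_apply, one_apply, dotProduct] using hu i j
  have hcols : (of u)ᵀ * of u = 1 := mul_eq_one_comm.mp hrows
  rw [← hcols]
  ext s t
  simp [mul_apply, sum_apply, vecMulVec_apply]

theorem eq_sum_smul_vecMulVec_of_mulVec_eq [DecidableEq n] {u : n → n → R}
    (hu : ∀ i j, u i ⬝ᵥ u j = if i = j then 1 else 0) {M : Matrix n n R} {lam : n → R}
    (hM : ∀ i, M *ᵥ u i = lam i • u i) :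
    M = ∑ i, lam i • vecMulVec (u i) (u i) := by
  calc M = M * ∑ i, vecMulVec (u i) (u i) := by rw [sum_vecMulVec_self_eq_one hu, mul_one]
    _ = ∑ i, lam i • vecMulVec (u i) (u i) := by
      simp only [Finset.mul_sum, mul_vecMulVec, hM, smul_vecMulVec]

theorem sum_vecMulVec_self_mulVec [DecidableEq ι] {u : ι → n → R}
    (hu : ∀ i j, u i ⬝ᵥ u j = if i = j then 1 else 0) (s : Finset ι) (j : ι) :
    (∑ i ∈ s, vecMulVec (u i) (u i)) *ᵥ u j = if j ∈ s then u j else 0 := by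
  simp [sum_mulVec, vecMulVec_mulVec, hu]

theorem rank_sum_vecMulVec_le {K : Type*} [Field K] (s : Finset ι) (x y : ι → n → K) :
    (∑ i ∈ s, vecMulVec (x i) (y i)).rank ≤ s.card := by
  classical
  have hrange : LinearMap.range (∑ i ∈ s, vecMulVec (x i) (y i)).mulVecLin
      ≤ Submodule.span K (s.image x : Set (n → K)) := by
    rintro _ ⟨v, rfl⟩
    simp only [mulVecLin_apply, sum_mulVec, vecMulVec_mulVec, op_smul_eq_smul]
    exact Submodule.sum_mem _ fun i hi => Submodule.smul_mem _ _
      (Submodule.subset_span (Finset.mem_coe.2 (Finset.mem_image_of_mem x hi)))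
  calc _ ≤ Module.finrank K (Submodule.span K (s.image x : Set (n → K))) :=
        Submodule.finrank_mono hrange
    _ ≤ (s.image x).card := finrank_span_finset_le_card _
    _ ≤ s.card := Finset.card_image_le

end Matrix

section SecondMoment

variable {Ω : Type} [MeasurableSpace Ω] {μ : Measure Ω} {n : ℕ} {X : Ω → Fin n → ℝ}

theorem memLp_dotProduct (hX : MemLp X 2 μ) (a : Fin n → ℝ) :
    MemLp (fun ω => a ⬝ᵥ X ω) 2 μ :=
  memLp_finsetSum _ fun s _ => (hX.eval s).const_mul (a s)

theorem integral_dotProduct_sq (hX : MemLp X 2 μ) (a : Fin n → ℝ) :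
    ∫ ω, (a ⬝ᵥ X ω) ^ 2 ∂μ = a ⬝ᵥ (secondMoment μ X X *ᵥ a) := by
  have hint : ∀ s t, Integrable (fun ω => a s * a t * (X ω s * X ω t)) μ := fun s t =>
    ((hX.eval s).integrable_mul (hX.eval t)).const_mul _
  calc ∫ ω, (a ⬝ᵥ X ω) ^ 2 ∂μ = ∫ ω, ∑ s, ∑ t, a s * a t * (X ω s * X ω t) ∂μ := by
        congr 1; ext ω
        simp only [dotProduct, sq, Finset.sum_mul_sum]
        exact Finset.sum_congr rfl fun s _ => Finset.sum_congr rfl fun t _ => by ring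
    _ = ∑ s, ∑ t, a s * a t * ∫ ω, X ω s * X ω t ∂μ := by
        rw [integral_finsetSum _ fun s _ => integrable_finsetSum _ fun t _ => hint s t]
        simp only [integral_finsetSum _ fun t _ => hint _ t, integral_const_mul]
    _ = a ⬝ᵥ (secondMoment μ X X *ᵥ a) := by
        simp only [dotProduct, mulVec, secondMoment, of_apply, Finset.mul_sum]
        exact Finset.sum_congr rfl fun s _ => Finset.sum_congr rfl fun t _ => by ring

theorem integral_sum_sq_mulVec {ι : Type*} [Fintype ι] {m : ℕ} (hX : MemLp X 2 μ)
    {u : ι → Fin n → ℝ} {lam : ι → ℝ}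
    (hΓ : secondMoment μ X X = ∑ j, lam j • vecMulVec (u j) (u j))
    (M : Matrix (Fin m) (Fin n) ℝ) :
    ∫ ω, ∑ i, (M *ᵥ X ω) i ^ 2 ∂μ = ∑ j, lam j * ∑ i, (M *ᵥ u j) i ^ 2 := by
  have hrow : ∀ i, ∫ ω, (M *ᵥ X ω) i ^ 2 ∂μ = ∑ j, lam j * (M *ᵥ u j) i ^ 2 := by
    intro i
    change ∫ ω, (M i ⬝ᵥ X ω) ^ 2 ∂μ = _
    rw [integral_dotProduct_sq hX, hΓ, sum_mulVec, dotProduct_sum]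
    refine Finset.sum_congr rfl fun j _ => ?_
    rw [smul_mulVec, vecMulVec_mulVec, dotProduct_smul, dotProduct_smul, op_smul_eq_smul,
      smul_eq_mul, smul_eq_mul, sq]
    congr 2; exact dotProduct_comm _ _
  have hint : ∀ i, Integrable (fun ω => (M *ᵥ X ω) i ^ 2) μ := fun i =>
    (memLp_dotProduct hX (M i)).integrable_sq
  rw [integral_finsetSum _ fun i _ => hint i]
  simp only [hrow, Finset.mul_sum]
  exact Finset.sum_comm

end SecondMoment

theorem sum_mul_le_sum_of_threshold {ι : Type*} [Fintype ι] (S : Finset ι) {lam p : ι → ℝ}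
    {θ : ℝ} (hθ : 0 ≤ θ) (hS : ∀ i ∈ S, θ ≤ lam i) (hSc : ∀ i ∉ S, lam i ≤ θ)
    (hp0 : ∀ i, 0 ≤ p i) (hp1 : ∀ i, p i ≤ 1) (hp : ∑ i, p i ≤ S.card) :
    ∑ i, lam i * p i ≤ ∑ i ∈ S, lam i := by
  classical
  have hpoint : ∀ i, lam i * p i - (if i ∈ S then lam i else 0)
      ≤ θ * (p i - if i ∈ S then 1 else 0) := by
    intro i
    by_cases hi : i ∈ S
    · simp only [hi, if_true]; nlinarith [hS i hi, hp1 i]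
    · simp only [hi, if_false, sub_zero]; nlinarith [hSc i hi, hp0 i]
  have hsum := Finset.sum_le_sum fun i (_ : i ∈ Finset.univ) => hpoint i
  simp only [Finset.sum_sub_distrib, ← Finset.mul_sum, Finset.sum_ite_mem, Finset.univ_inter,
    Finset.sum_const, nsmul_eq_mul, mul_one] at hsum
  linarith [mul_nonpos_of_nonneg_of_nonpos hθ (sub_nonpos.2 hp)]

section InnerProductSpace

variable {E : Type*} [NormedAddCommGroup E] [InnerProductSpace ℝ E] (K : Submodule ℝ E)

open scoped RealInnerProductSpace

theorem Submodule.norm_sq_sub_norm_starProjection_sq_le [K.HasOrthogonalProjection] (x : E)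
    {y : E} (hy : y ∈ K) : ‖x‖ ^ 2 - ‖K.starProjection x‖ ^ 2 ≤ ‖y - x‖ ^ 2 := by
  have hpyth : ‖x‖ ^ 2 - ‖K.starProjection x‖ ^ 2 = ‖x - K.starProjection x‖ ^ 2 := by
    rw [K.norm_sq_eq_add_norm_sq_starProjection x, Submodule.starProjection_orthogonal_val]
    ring
  have hmin : ‖x - K.starProjection x‖ ≤ ‖x - y‖ := by
    rw [Submodule.starProjection_minimal]
    exact ciInf_le ⟨0, Set.forall_mem_range.2 fun _ => norm_nonneg _⟩ (⟨y, hy⟩ : K)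
  rw [hpyth, norm_sub_rev y]
  gcongr

theorem Submodule.sum_norm_starProjection_sq_le_finrank [FiniteDimensional ℝ K] {ι : Type*}
    {w : ι → E} (hw : Orthonormal ℝ w) (s : Finset ι) :
    ∑ i ∈ s, ‖K.starProjection (w i)‖ ^ 2 ≤ Module.finrank ℝ K := by
  let b := stdOrthonormalBasis ℝ K
  have hcoord : ∀ x, ‖K.starProjection x‖ ^ 2 = ∑ j, ⟪x, (b j : E)⟫ ^ 2 := by
    intro x
    rw [Submodule.starProjection_apply, Submodule.norm_coe,
      ← b.sum_sq_norm_inner_left (K.orthogonalProjectionOnto x)]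
    simp only [Submodule.inner_orthogonalProjectionOnto_eq_of_mem_right, Real.norm_eq_abs, sq_abs]
  calc ∑ i ∈ s, ‖K.starProjection (w i)‖ ^ 2 = ∑ j, ∑ i ∈ s, ‖⟪w i, (b j : E)⟫‖ ^ 2 := by
        simp only [hcoord, Real.norm_eq_abs, sq_abs]
        exact Finset.sum_comm
    _ ≤ ∑ j, ‖(b j : E)‖ ^ 2 := Finset.sum_le_sum fun j _ => hw.sum_inner_products_le _
    _ = Module.finrank ℝ K := by
        simp only [Submodule.norm_coe, b.orthonormal.1, one_pow, Finset.sum_const,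
          Finset.card_univ, Fintype.card_fin, nsmul_eq_mul, mul_one]

theorem Submodule.sum_compl_le_sum_mul_norm_sub_sq [FiniteDimensional ℝ K] {ι : Type*}
    [Fintype ι] [DecidableEq ι] {w y : ι → E} (hw : Orthonormal ℝ w) (hy : ∀ i, y i ∈ K)
    (S : Finset ι) (hK : Module.finrank ℝ K ≤ S.card) {lam : ι → ℝ} {θ : ℝ} (hθ : 0 ≤ θ)
    (hS : ∀ i ∈ S, θ ≤ lam i) (hSc : ∀ i ∉ S, lam i ≤ θ) (hlam : ∀ i, 0 ≤ lam i) :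
    ∑ i ∈ Sᶜ, lam i ≤ ∑ i, lam i * ‖y i - w i‖ ^ 2 := by
  have hp : ∑ i, lam i * ‖K.starProjection (w i)‖ ^ 2 ≤ ∑ i ∈ S, lam i := by
    refine sum_mul_le_sum_of_threshold S hθ hS hSc (fun i => sq_nonneg _) (fun i => ?_) ?_
    · simpa [hw.1 i] using
        pow_le_pow_left₀ (norm_nonneg _) (K.norm_starProjection_apply_le (w i)) 2
    · exact (K.sum_norm_starProjection_sq_le_finrank hw _).trans (by exact_mod_cast hK)
  have hdist : ∀ i, 1 - ‖K.starProjection (w i)‖ ^ 2 ≤ ‖y i - w i‖ ^ 2 := fun i => by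
    simpa [hw.1 i] using K.norm_sq_sub_norm_starProjection_sq_le (w i) (hy i)
  calc ∑ i ∈ Sᶜ, lam i = ∑ i, lam i * 1 - ∑ i ∈ S, lam i := by
        rw [← Finset.sum_compl_add_sum S]; simp
    _ ≤ ∑ i, lam i * (1 - ‖K.starProjection (w i)‖ ^ 2) := by
        simp only [mul_sub, Finset.sum_sub_distrib]; linarith
    _ ≤ ∑ i, lam i * ‖y i - w i‖ ^ 2 :=
        Finset.sum_le_sum fun i _ => mul_le_mul_of_nonneg_left (hdist i) (hlam i)

end InnerProductSpace

theorem Matrix.sum_compl_le_sum_mul_sum_sq_mulVec_sub {n ι : Type*} [Fintype n] [Fintype ι]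
    [DecidableEq ι] (A : Matrix n n ℝ) {u : ι → n → ℝ}
    (hu : ∀ i j, u i ⬝ᵥ u j = if i = j then 1 else 0) (S : Finset ι) (hA : A.rank ≤ S.card)
    {lam : ι → ℝ} {θ : ℝ} (hθ : 0 ≤ θ) (hS : ∀ i ∈ S, θ ≤ lam i) (hSc : ∀ i ∉ S, lam i ≤ θ)
    (hlam : ∀ i, 0 ≤ lam i) :
    ∑ i ∈ Sᶜ, lam i ≤ ∑ i, lam i * ∑ k, (A *ᵥ u i - u i) k ^ 2 := by
  let K := (LinearMap.range A.mulVecLin).map (WithLp.linearEquiv 2 ℝ (n → ℝ)).symm.toLinearMap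
  have hK : Module.finrank ℝ K = A.rank := LinearEquiv.finrank_map_eq _ _
  have hw : Orthonormal ℝ fun i => WithLp.toLp 2 (u i) := by
    refine orthonormal_iff_ite.2 fun i j => ?_
    simp [EuclideanSpace.inner_toLp_toLp, dotProduct_comm (u j), hu]
  have hy : ∀ i, WithLp.toLp 2 (A *ᵥ u i) ∈ K := fun i =>
    Submodule.mem_map_of_mem (LinearMap.mem_range_self _ (u i))
  have hnorm : ∀ i, ∑ k, (A *ᵥ u i - u i) k ^ 2
      = ‖WithLp.toLp 2 (A *ᵥ u i) - WithLp.toLp 2 (u i)‖ ^ 2 := fun i => by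
    rw [EuclideanSpace.real_norm_sq_eq, ← WithLp.toLp_sub]
  simp only [hnorm]
  exact K.sum_compl_le_sum_mul_norm_sub_sq hw hy S (hK ▸ hA) hθ hS hSc hlam

theorem exists_threshold_of_antitone {n : ℕ} {lam : Fin n → ℝ} (hmono : Antitone lam)
    (hnonneg : ∀ i, 0 ≤ lam i) (r : ℕ) :
    ∃ θ, 0 ≤ θ ∧ (∀ i : Fin n, (i : ℕ) < r → θ ≤ lam i) ∧ ∀ i : Fin n, r ≤ i → lam i ≤ θ := by
  by_cases hr : r < n
  · exact ⟨lam ⟨r, hr⟩, hnonneg _, fun i hi => hmono (Fin.le_iff_val_le_val.2 hi.le),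
      fun i hi => hmono (Fin.le_iff_val_le_val.2 hi)⟩
  · exact ⟨0, le_rfl, fun i _ => hnonneg i, fun i hi => absurd i.isLt (by omega)⟩

theorem pca_autoencoder_optimal {Ω : Type} [MeasurableSpace Ω]
    (μ : Measure Ω) {n : ℕ}
    (X : Ω → Fin n → ℝ) (hX : MemLp X 2 μ)
    (u : Fin n → Fin n → ℝ) (lam : Fin n → ℝ)
    (hortho : ∀ i j : Fin n, (∑ t, u i t * u j t) = if i = j then 1 else 0)
    (heig : ∀ i : Fin n, secondMoment μ X X *ᵥ u i = lam i • u i)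
    (hmono : ∀ i j : Fin n, i ≤ j → lam j ≤ lam i)
    (hnonneg : ∀ i : Fin n, 0 ≤ lam i)
    (r : ℕ) (hr : r ≤ n) :
    (∑ i ∈ Finset.univ.filter (fun i : Fin n => (i : ℕ) < r),
        Matrix.vecMulVec (u i) (u i)).rank ≤ r ∧
      ∀ A : Matrix (Fin n) (Fin n) ℝ, A.rank ≤ r →
        ∫ ω, ∑ i, ((∑ i ∈ Finset.univ.filter (fun i : Fin n => (i : ℕ) < r),
              Matrix.vecMulVec (u i) (u i)) *ᵥ X ω - X ω) i ^ 2 ∂μ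
          ≤ ∫ ω, ∑ i, (A *ᵥ X ω - X ω) i ^ 2 ∂μ := by
  set S := Finset.univ.filter (fun i : Fin n => (i : ℕ) < r)
  have hS : S.card = r := by simp [S, Fin.card_filter_val_lt, hr]
  have hΓ := eq_sum_smul_vecMulVec_of_mulVec_eq hortho heig
  have herr : ∀ B : Matrix (Fin n) (Fin n) ℝ, ∫ ω, ∑ i, (B *ᵥ X ω - X ω) i ^ 2 ∂μ
      = ∑ j, lam j * ∑ i, (B *ᵥ u j - u j) i ^ 2 := fun B => by
    simpa only [sub_mulVec, one_mulVec] using integral_sum_sq_mulVec (m := n) hX hΓ (B - 1)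
  have hunit : ∀ j, ∑ i, u j i ^ 2 = 1 := fun j => by simpa [sq] using hortho j j
  refine ⟨hS ▸ rank_sum_vecMulVec_le S u u, fun A hA => ?_⟩
  obtain ⟨θ, hθ, hlt, hge⟩ := exists_threshold_of_antitone hmono hnonneg r
  rw [herr, herr]
  have hP : ∀ j, ∑ i, ((∑ k ∈ S, vecMulVec (u k) (u k)) *ᵥ u j - u j) i ^ 2
      = if j ∈ Sᶜ then 1 else 0 := fun j => by
    rw [sum_vecMulVec_self_mulVec hortho]
    by_cases hj : j ∈ S <;> simp [hj, hunit j]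
  calc ∑ j, lam j * ∑ i, ((∑ k ∈ S, vecMulVec (u k) (u k)) *ᵥ u j - u j) i ^ 2
      = ∑ j ∈ Sᶜ, lam j := by
        simp only [hP, mul_ite, mul_one, mul_zero, Finset.sum_ite_mem, Finset.univ_inter]
    _ ≤ _ := sum_compl_le_sum_mul_sum_sq_mulVec_sub A hortho S (hS ▸ hA) hθ
        (fun i hi => hlt i (Finset.mem_filter.1 hi).2)
        (fun i hi => hge i (by simpa [S] using hi)) hnonneg
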